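/- arXiv:1807.00191 — 5 statements merged into one kernel-verified Lean document; each statement's English description precedes it below -/
import Mathlib

section
/- Let V be a finite-dimensional real inner product space and let τ : V → so(V) be linear with τ(X)Y = -τ(Y)X and ⟨τ(X)Y, Z⟩ totally skew-symmetric in X, Y, Z (i.e. τ comes from a 3-form). Define R(X,Y) := [τ(X), τ(Y)] - τ(τ(X)Y) + τ(τ(Y)X). Then the 4-tensor ⟨R(X,Y)Z, W⟩ satisfies the pair symmetry ⟨R(X,Y)Z,W⟩ = ⟨R(Z,W)X,Y⟩. -/
open scoped RealInnerProductSpace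

/-!
Total skew-symmetry of `⟪τ X Y, Z⟫` moves each `τ` across the inner product, so every term of
`⟪R X Y Z, W⟫` becomes an inner product of two values of `τ`:
`⟪R X Y Z, W⟫ = ⟪τ X Z, τ Y W⟫ - ⟪τ X W, τ Y Z⟫ - 2 ⟪τ X Y, τ Z W⟫`,
and this expression is visibly invariant under `(X, Y) ↔ (Z, W)`.
-/

section

variable {V : Type*} [NormedAddCommGroup V] [InnerProductSpace ℝ V]

structure IsThreeForm (τ : V →ₗ[ℝ] V →ₗ[ℝ] V) : Prop where
  apply_comm : ∀ X Y : V, τ X Y = - τ Y X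
  inner_apply_skew : ∀ X Y Z : V, ⟪τ X Y, Z⟫ = - ⟪τ X Z, Y⟫

def torsionCurvature (τ : V →ₗ[ℝ] V →ₗ[ℝ] V) (X Y : V) : V →ₗ[ℝ] V :=
  τ X ∘ₗ τ Y - τ Y ∘ₗ τ X - τ (τ X Y) + τ (τ Y X)

namespace IsThreeForm

variable {τ : V →ₗ[ℝ] V →ₗ[ℝ] V}

theorem inner_apply_cyclic (h : IsThreeForm τ) (X Y Z : V) : ⟪τ X Y, Z⟫ = ⟪τ Y Z, X⟫ := by
  rw [h.apply_comm X Y, inner_neg_left, h.inner_apply_skew, neg_neg]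

theorem inner_apply_apply_left (h : IsThreeForm τ) (A B C D : V) :
    ⟪τ A (τ B C), D⟫ = - ⟪τ B C, τ A D⟫ := by
  rw [h.inner_apply_skew, real_inner_comm]

theorem inner_apply_apply_right (h : IsThreeForm τ) (A B C D : V) :
    ⟪τ (τ A B) C, D⟫ = ⟪τ A B, τ C D⟫ := by
  rw [h.inner_apply_cyclic, real_inner_comm]

theorem inner_torsionCurvature_apply (h : IsThreeForm τ) (X Y Z W : V) :
    ⟪torsionCurvature τ X Y Z, W⟫ =
      ⟪τ X Z, τ Y W⟫ - ⟪τ X W, τ Y Z⟫ - 2 * ⟪τ X Y, τ Z W⟫ := by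
  simp only [torsionCurvature, LinearMap.add_apply, LinearMap.sub_apply, LinearMap.comp_apply,
    inner_add_left, inner_sub_left, h.inner_apply_apply_left, h.inner_apply_apply_right]
  rw [h.apply_comm Y X, inner_neg_left, real_inner_comm (τ Y Z)]
  ring

theorem inner_torsionCurvature_pair_comm (h : IsThreeForm τ) (X Y Z W : V) :
    ⟪torsionCurvature τ X Y Z, W⟫ = ⟪torsionCurvature τ Z W X, Y⟫ := by
  rw [h.inner_torsionCurvature_apply, h.inner_torsionCurvature_apply, h.apply_comm W X,
    h.apply_comm Z Y, h.apply_comm Z X, h.apply_comm W Y]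
  simp only [inner_neg_left, inner_neg_right, neg_neg]
  rw [real_inner_comm (τ X W), real_inner_comm (τ X Y)]

end IsThreeForm

end

theorem stmt0_general {V : Type*} [NormedAddCommGroup V] [InnerProductSpace ℝ V]
    (τ : V →ₗ[ℝ] V →ₗ[ℝ] V)
    (hanti : ∀ X Y : V, τ X Y = - τ Y X)
    (hskew : ∀ X Y Z : V, ⟪τ X Y, Z⟫ = - ⟪τ X Z, Y⟫)
    (R : V → V → V →ₗ[ℝ] V)
    (hR : ∀ X Y : V, R X Y = τ X ∘ₗ τ Y - τ Y ∘ₗ τ X - τ (τ X Y) + τ (τ Y X)) :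
    ∀ X Y Z W : V, ⟪R X Y Z, W⟫ = ⟪R Z W X, Y⟫ := by
  have hR_eq : R = torsionCurvature τ := funext₂ hR
  subst hR_eq
  exact IsThreeForm.inner_torsionCurvature_pair_comm ⟨hanti, hskew⟩

/-- For a 3-form `τ` on a finite-dimensional real inner product space `V`
(viewed as a linear map `τ : V → so(V)` with `τ X Y = -τ Y X` and `⟪τ X Y, Z⟫` totally
skew-symmetric), the tensor `R(X,Y) = [τ_X, τ_Y] - τ_{τ_X Y} + τ_{τ_Y X}` satisfies the
pair symmetry `⟪R X Y Z, W⟫ = ⟪R Z W X, Y⟫`. -/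
theorem stmt0 {V : Type*} [NormedAddCommGroup V] [InnerProductSpace ℝ V]
    [FiniteDimensional ℝ V]
    (τ : V →ₗ[ℝ] V →ₗ[ℝ] V)
    (hanti : ∀ X Y : V, τ X Y = - τ Y X)
    (hskew : ∀ X Y Z : V, ⟪τ X Y, Z⟫ = - ⟪τ X Z, Y⟫)
    (R : V → V → V →ₗ[ℝ] V)
    (hR : ∀ X Y : V, R X Y = τ X ∘ₗ τ Y - τ Y ∘ₗ τ X - τ (τ X Y) + τ (τ Y X)) :
    ∀ X Y Z W : V, ⟪R X Y Z, W⟫ = ⟪R Z W X, Y⟫ :=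
  stmt0_general τ hanti hskew R hR
end

section
/- Let k ⊆ so(V) be a Lie subalgebra, h ⊆ V a k-invariant irreducible subspace with k ∩ so(h) ≠ 0 (where so(h) ⊆ so(V) consists of skew endomorphisms vanishing on h^⊥). Then the k-representation h ⊗ Λ²(h^⊥) has no nonzero invariant vectors. -/
open scoped RealInnerProductSpace

attribute [local instance 100] LieRing.ofAssociativeRing

/-! The elements of `k` vanishing on `hᗮ` form an ideal `k_h` of `k`, since `hᗮ` is `k`-invariant.
Hence the common kernel of `k_h` in `h` is a `k`-invariant subspace of `h`; it is not all of `h`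
(else `k_h` would vanish on `h ⊕ hᗮ = V`), so by irreducibility it is zero. An invariant `u`
takes values in it, because `A (u x y) = u (A x) y + u x (A y) = 0` for `A ∈ k_h`. -/

namespace LieSubalgebra

variable {R M : Type*} [CommRing R] [AddCommGroup M] [Module R M]
  (k : LieSubalgebra R (Module.End R M)) (P : Submodule R M)

def commonKerOfVanishingOn : Submodule R M :=
  ⨅ A : {A : k // P ≤ LinearMap.ker (A : Module.End R M)}, LinearMap.ker (A.1 : Module.End R M)

variable {k P}

theorem mem_commonKerOfVanishingOn {v : M} :
    v ∈ k.commonKerOfVanishingOn P ↔ ∀ A ∈ k, P ≤ LinearMap.ker A → A v = 0 := by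
  simp only [commonKerOfVanishingOn, Submodule.mem_iInf, LinearMap.mem_ker, Subtype.forall]

theorem mapsTo_commonKerOfVanishingOn (hP : ∀ B ∈ k, ∀ w ∈ P, B w ∈ P)
    {B : Module.End R M} (hB : B ∈ k) {v : M} (hv : v ∈ k.commonKerOfVanishingOn P) :
    B v ∈ k.commonKerOfVanishingOn P := by
  rw [mem_commonKerOfVanishingOn] at hv ⊢
  intro A hA hAP
  have hbracketP : P ≤ LinearMap.ker ⁅A, B⁆ := fun w hw => by
    change A (B w) - B (A w) = 0
    rw [hAP (hP B hB w hw), hAP hw, map_zero, sub_zero]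
  have hbracket : A (B v) - B (A v) = 0 := hv _ (k.lie_mem hA hB) hbracketP
  rwa [hv A hA hAP, map_zero, sub_zero] at hbracket

theorem inf_commonKerOfVanishingOn_eq_bot {h : Submodule R M} (hsup : h ⊔ P = ⊤)
    (hinv : ∀ A ∈ k, ∀ v ∈ h, A v ∈ h) (hP : ∀ B ∈ k, ∀ w ∈ P, B w ∈ P)
    (hirr : ∀ W : Submodule R M, W ≤ h → (∀ A ∈ k, ∀ v ∈ W, A v ∈ W) → W = ⊥ ∨ W = h)
    (hne : ∃ A ∈ k, P ≤ LinearMap.ker A ∧ A ≠ 0) :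
    h ⊓ k.commonKerOfVanishingOn P = ⊥ := by
  refine (hirr _ inf_le_left fun A hA v hv =>
    ⟨hinv A hA v hv.1, mapsTo_commonKerOfVanishingOn hP hA hv.2⟩).resolve_right fun heq => ?_
  obtain ⟨A, hA, hAP, hA0⟩ := hne
  have hAh : h ≤ LinearMap.ker A := fun v hv =>
    mem_commonKerOfVanishingOn.1 (heq.ge hv).2 A hA hAP
  exact hA0 (LinearMap.ker_eq_top.1 (top_unique (hsup ▸ sup_le hAh hAP)))

end LieSubalgebra

theorem Submodule.mapsTo_orthogonal_of_skew {V : Type*} [NormedAddCommGroup V]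
    [InnerProductSpace ℝ V] {A : V →ₗ[ℝ] V} (hskew : ∀ x y : V, ⟪A x, y⟫ = - ⟪x, A y⟫)
    {h : Submodule ℝ V} (hinv : ∀ v ∈ h, A v ∈ h) {w : V} (hw : w ∈ hᗮ) : A w ∈ hᗮ :=
  fun v hv => by rw [← neg_eq_zero, ← hskew]; exact hw _ (hinv v hv)

theorem stmt2_general {V : Type*} [NormedAddCommGroup V] [InnerProductSpace ℝ V]
    [FiniteDimensional ℝ V]
    (k : LieSubalgebra ℝ (Module.End ℝ V))
    (hskewadj : ∀ A ∈ k, ∀ x y : V, ⟪A x, y⟫ = - ⟪x, A y⟫)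
    (h : Submodule ℝ V)
    (hinv : ∀ A ∈ k, ∀ v ∈ h, A v ∈ h)
    (hirr : ∀ W : Submodule ℝ V, W ≤ h → (∀ A ∈ k, ∀ v ∈ W, A v ∈ W) → W = ⊥ ∨ W = h)
    (hkh : ∃ A ∈ k, (∀ w ∈ hᗮ, A w = 0) ∧ A ≠ 0)
    (u : V →ₗ[ℝ] V →ₗ[ℝ] V)
    (hval : ∀ x ∈ hᗮ, ∀ y ∈ hᗮ, u x y ∈ h)
    (huinv : ∀ A ∈ k, ∀ x ∈ hᗮ, ∀ y ∈ hᗮ, A (u x y) - u (A x) y - u x (A y) = 0) :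
    ∀ x ∈ hᗮ, ∀ y ∈ hᗮ, u x y = 0 := by
  intro x hx y hy
  have hperp : ∀ B ∈ k, ∀ w ∈ hᗮ, B w ∈ hᗮ := fun B hB _ hw =>
    Submodule.mapsTo_orthogonal_of_skew (hskewadj B hB) (hinv B hB) hw
  have hbot := LieSubalgebra.inf_commonKerOfVanishingOn_eq_bot
    h.sup_orthogonal_of_hasOrthogonalProjection hinv hperp hirr hkh
  have hmem : u x y ∈ h ⊓ k.commonKerOfVanishingOn hᗮ := by
    refine ⟨hval x hx y hy, LieSubalgebra.mem_commonKerOfVanishingOn.2 fun A hA hAP => ?_⟩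
    simpa [LinearMap.mem_ker.1 (hAP hx), LinearMap.mem_ker.1 (hAP hy)] using huinv A hA x hx y hy
  simpa [hbot] using hmem

/-- Let `k ⊆ so(V)` be a Lie subalgebra, `h` a `k`-invariant irreducible
subspace with `k ∩ so(h) ≠ 0`. Then the `k`-representation `h ⊗ Λ²(hᗮ)` has no nonzero
invariant vectors.  An element of `h ⊗ Λ²(hᗮ)` is encoded as an alternating bilinear map
`u` on `hᗮ` with values in `h`; invariance means `A (u x y) - u (A x) y - u x (A y) = 0`
for all `A ∈ k` and `x, y ∈ hᗮ`, and the conclusion is `u x y = 0` on `hᗮ`. -/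
theorem stmt2 {V : Type*} [NormedAddCommGroup V] [InnerProductSpace ℝ V]
    [FiniteDimensional ℝ V]
    (k : LieSubalgebra ℝ (Module.End ℝ V))
    (hskewadj : ∀ A ∈ k, ∀ x y : V, ⟪A x, y⟫ = - ⟪x, A y⟫)
    (h : Submodule ℝ V)
    (hinv : ∀ A ∈ k, ∀ v ∈ h, A v ∈ h)
    (hirr : ∀ W : Submodule ℝ V, W ≤ h → (∀ A ∈ k, ∀ v ∈ W, A v ∈ W) → W = ⊥ ∨ W = h)
    (hkh : ∃ A ∈ k, (∀ w ∈ hᗮ, A w = 0) ∧ A ≠ 0)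
    (u : V →ₗ[ℝ] V →ₗ[ℝ] V)
    (halt : ∀ x y : V, u x y = - u y x)
    (hval : ∀ x ∈ hᗮ, ∀ y ∈ hᗮ, u x y ∈ h)
    (huinv : ∀ A ∈ k, ∀ x ∈ hᗮ, ∀ y ∈ hᗮ, A (u x y) - u (A x) y - u x (A y) = 0) :
    ∀ x ∈ hᗮ, ∀ y ∈ hᗮ, u x y = 0 :=
  stmt2_general k hskewadj h hinv hirr hkh u hval huinv
end

section
/- Let (M,g) be a Riemannian manifold with a geometry with parallel skew-symmetric torsion (τ a 3-form, ∇^τ = ∇^g + τ, ∇^τ τ = 0). Suppose T M = T₁ ⊕ T₂ is an orthogonal ∇^τ-parallel decomposition and τ = τ₁ + τ₂ with τᵢ ∈ Γ(Λ³ Tᵢ*). Then T₁ and T₂ are parallel with respect to the Levi-Civita connection ∇^g. -/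
theorem stmt5_general {F X : Type*} [CommRing F] [LieRing X] [Module F X]
    (nabla : X → X → X)
    (τ : X → X → X)
    (T₁ T₂ : Submodule F X)
    -- `T₁` and `T₂` are `∇^τ`-parallel
    (hpar1 : ∀ y : X, ∀ a ∈ T₁, nabla y a + τ y a ∈ T₁)
    (hpar2 : ∀ y : X, ∀ b ∈ T₂, nabla y b + τ y b ∈ T₂)
    -- `τ = τ₁ + τ₂ ∈ Λ³T₁ ⊕ Λ³T₂`, expressed on the (2,1)-tensor
    (hτ1 : ∀ y : X, ∀ a ∈ T₁, τ y a ∈ T₁)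
    (hτ2 : ∀ y : X, ∀ b ∈ T₂, τ y b ∈ T₂) :
    (∀ y : X, ∀ a ∈ T₁, nabla y a ∈ T₁) ∧ (∀ y : X, ∀ b ∈ T₂, nabla y b ∈ T₂) :=
  ⟨fun y a ha => (T₁.add_mem_iff_left (hτ1 y a ha)).1 (hpar1 y a ha),
    fun y b hb => (T₂.add_mem_iff_left (hτ2 y b hb)).1 (hpar2 y b hb)⟩

/-- Abstract algebraic model of a geometry with parallel skew-symmetric
torsion: `X` = vector fields (a Lie algebra and a module over the functions `F`), `g` the
metric, `nabla` the Levi-Civita connection, `τ` a 3-form viewed as a (2,1)-tensor, and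
`∇^τ = ∇^g + τ` with `∇^τ τ = 0`. Suppose `T M = T₁ ⊕ T₂` is an orthogonal
`∇^τ`-parallel decomposition and `τ = τ₁ + τ₂ ∈ Λ³T₁ ⊕ Λ³T₂` (equivalently, as a
(2,1)-tensor, `τ y x ∈ Tᵢ` whenever `x ∈ Tᵢ`). Then `T₁` and `T₂` are parallel with
respect to the Levi-Civita connection `∇^g`. -/
theorem stmt5 {F X : Type*} [CommRing F] [LieRing X] [Module F X]
    (D : X → F → F)
    (g : X → X → F)
    (hgsymm : ∀ x y : X, g x y = g y x)
    (nabla : X → X → X)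
    (htorsionfree : ∀ x y : X, nabla x y - nabla y x = ⁅x, y⁆)
    (hmetric : ∀ x y z : X, D x (g y z) = g (nabla x y) z + g y (nabla x z))
    (τ : X → X → X)
    (hτanti : ∀ x y : X, τ x y = - τ y x)
    (hτskew : ∀ x y z : X, g (τ x y) z = - g (τ x z) y)
    -- the torsion is `∇^τ`-parallel: `(∇^τ_z τ)(x,y) = 0`
    (hτpar : ∀ z x y : X,
      (nabla z (τ x y) + τ z (τ x y)) - τ (nabla z x + τ z x) y - τ x (nabla z y + τ z y) = 0)
    (T₁ T₂ : Submodule F X)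
    (horth : ∀ a ∈ T₁, ∀ b ∈ T₂, g a b = 0)
    (hspan : T₁ ⊔ T₂ = ⊤)
    -- `T₁` and `T₂` are `∇^τ`-parallel
    (hpar1 : ∀ y : X, ∀ a ∈ T₁, nabla y a + τ y a ∈ T₁)
    (hpar2 : ∀ y : X, ∀ b ∈ T₂, nabla y b + τ y b ∈ T₂)
    -- `τ = τ₁ + τ₂ ∈ Λ³T₁ ⊕ Λ³T₂`, expressed on the (2,1)-tensor
    (hτ1 : ∀ y : X, ∀ a ∈ T₁, τ y a ∈ T₁)
    (hτ2 : ∀ y : X, ∀ b ∈ T₂, τ y b ∈ T₂) :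
    (∀ y : X, ∀ a ∈ T₁, nabla y a ∈ T₁) ∧ (∀ y : X, ∀ b ∈ T₂, nabla y b ∈ T₂) :=
  stmt5_general nabla τ T₁ T₂ hpar1 hpar2 hτ1 hτ2
end

section
/- Let V be a finite-dimensional real inner product space and τ ∈ Λ³V identified with τ : V → so(V). Then Σᵢ eᵢ ∧ (τ_{eᵢ} · τ_ξ) = -2 τ_ξ · τ for every ξ ∈ V, where {eᵢ} is an orthonormal basis, · denotes the derivation action of so(V) on forms, τ_{eᵢ}·τ_ξ is identified with the 2-form of the commutator [τ_{eᵢ}, τ_ξ], and τ_ξ · τ is the derivation action of τ_ξ on the 3-form τ. -/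
/-!
Expanding `X` in the orthonormal basis collapses the wedge sum to
`⟪[τ_X, τ_ξ] Y, Z⟫ - ⟪[τ_Y, τ_ξ] X, Z⟫ + ⟪[τ_Z, τ_ξ] X, Y⟫`. Since `τ_ξ` is skew and
`T(X, Y, Z) = ⟪τ X Y, Z⟫` is totally antisymmetric, each of these three terms is the sum of two
of the three terms `T(τ_ξ X, Y, Z)`, `T(X, τ_ξ Y, Z)`, `T(X, Y, τ_ξ Z)` of `-(τ_ξ · τ)(X, Y, Z)`,
and every one of those occurs exactly twice.
-/

open scoped RealInnerProductSpace

theorem OrthonormalBasis.sum_inner_mul_inner_map {V : Type*} [NormedAddCommGroup V]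
    [InnerProductSpace ℝ V] {ι : Type*} [Fintype ι] (b : OrthonormalBasis ι ℝ V)
    (f : V →ₗ[ℝ] V) (x z : V) :
    ∑ i, ⟪b i, x⟫ * ⟪f (b i), z⟫ = ⟪f x, z⟫ := by
  conv_rhs => rw [← b.sum_repr' x]
  simp only [map_sum, map_smul, sum_inner, real_inner_smul_left]

section TotallySkew

variable {V : Type*} [NormedAddCommGroup V] [InnerProductSpace ℝ V]
  {τ : V →ₗ[ℝ] V →ₗ[ℝ] V}

theorem inner_apply_apply_cyclic (hanti : ∀ x y : V, τ x y = - τ y x)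
    (hskew : ∀ x y z : V, ⟪τ x y, z⟫ = - ⟪τ x z, y⟫) (x y z : V) :
    ⟪τ x y, z⟫ = ⟪τ y z, x⟫ := by
  rw [hanti x y, inner_neg_left, hskew y x z]
  ring

theorem inner_commutator_apply (hskew : ∀ x y z : V, ⟪τ x y, z⟫ = - ⟪τ x z, y⟫)
    (ξ x y z : V) :
    ⟪τ x (τ ξ y) - τ ξ (τ x y), z⟫ = ⟪τ x (τ ξ y), z⟫ + ⟪τ x y, τ ξ z⟫ := by
  rw [inner_sub_left, hskew ξ, real_inner_comm (τ x y)]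
  ring

theorem inner_commutator_alternating_sum (hanti : ∀ x y : V, τ x y = - τ y x)
    (hskew : ∀ x y z : V, ⟪τ x y, z⟫ = - ⟪τ x z, y⟫) (ξ x y z : V) :
    ⟪τ x (τ ξ y) - τ ξ (τ x y), z⟫ - ⟪τ y (τ ξ x) - τ ξ (τ y x), z⟫
        + ⟪τ z (τ ξ x) - τ ξ (τ z x), y⟫
      = 2 * (⟪τ (τ ξ x) y, z⟫ + ⟪τ x (τ ξ y), z⟫ + ⟪τ x y, τ ξ z⟫) := by
  have hcyc := inner_apply_apply_cyclic hanti hskew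
  simp only [inner_commutator_apply hskew]
  rw [hanti y (τ ξ x), hanti y x, inner_neg_left, inner_neg_left,
    hcyc z (τ ξ x) y, hcyc z x (τ ξ y)]
  ring

end TotallySkew

/-- Both sides as 3-forms on `(X, Y, Z)`: `(eᵢ ∧ β)(X,Y,Z) = ⟪eᵢ,X⟫β(Y,Z) - ⟪eᵢ,Y⟫β(X,Z) + ⟪eᵢ,Z⟫β(X,Y)`
and `(τ_ξ · T)(X,Y,Z) = -T(τ_ξX,Y,Z) - T(X,τ_ξY,Z) - T(X,Y,τ_ξZ)` with `T(X,Y,Z) = ⟪τ X Y, Z⟫`. -/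
theorem stmt8_general {V : Type*} [NormedAddCommGroup V] [InnerProductSpace ℝ V]
    {ι : Type*} [Fintype ι] (b : OrthonormalBasis ι ℝ V)
    (τ : V →ₗ[ℝ] V →ₗ[ℝ] V)
    (hanti : ∀ x y : V, τ x y = - τ y x)
    (hskew : ∀ x y z : V, ⟪τ x y, z⟫ = - ⟪τ x z, y⟫)
    (ξ : V) :
    ∀ X Y Z : V,
      (∑ i,
        (⟪b i, X⟫ * ⟪τ (b i) (τ ξ Y) - τ ξ (τ (b i) Y), Z⟫
          - ⟪b i, Y⟫ * ⟪τ (b i) (τ ξ X) - τ ξ (τ (b i) X), Z⟫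
          + ⟪b i, Z⟫ * ⟪τ (b i) (τ ξ X) - τ ξ (τ (b i) X), Y⟫))
      = (-2 : ℝ) * (-(⟪τ (τ ξ X) Y, Z⟫) - ⟪τ X (τ ξ Y), Z⟫ - ⟪τ X Y, τ ξ Z⟫) := by
  intro X Y Z
  have hexpand (y w z : V) :
      ∑ i, ⟪b i, w⟫ * ⟪τ (b i) (τ ξ y) - τ ξ (τ (b i) y), z⟫
        = ⟪τ w (τ ξ y) - τ ξ (τ w y), z⟫ :=
    b.sum_inner_mul_inner_map (τ.flip (τ ξ y) - (τ ξ).comp (τ.flip y)) w z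
  rw [Finset.sum_add_distrib, Finset.sum_sub_distrib, hexpand, hexpand, hexpand,
    inner_commutator_alternating_sum hanti hskew]
  ring

/-- For a 3-form `τ ∈ Λ³V` identified with `τ : V → so(V)` and `ξ ∈ V`:
`Σᵢ eᵢ ∧ (τ_{eᵢ} · τ_ξ) = -2 τ_ξ · τ`, where `{eᵢ}` is an orthonormal basis, `·` is the
derivation action of `so(V)` on forms, `τ_{eᵢ} · τ_ξ` is the 2-form of the commutator
`[τ_{eᵢ}, τ_ξ]`, and `τ_ξ · τ` is the derivation action of `τ_ξ` on the 3-form `τ`.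
Both sides are evaluated as 3-forms on `(X, Y, Z)`: the wedge of the 1-form `eᵢ` with a
2-form `β` is `(eᵢ ∧ β)(X,Y,Z) = ⟪eᵢ,X⟫β(Y,Z) - ⟪eᵢ,Y⟫β(X,Z) + ⟪eᵢ,Z⟫β(X,Y)`, and
`(τ_ξ · T)(X,Y,Z) = -T(τ_ξX,Y,Z) - T(X,τ_ξY,Z) - T(X,Y,τ_ξZ)` with
`T(X,Y,Z) = ⟪τ X Y, Z⟫`. -/
theorem stmt8 {V : Type*} [NormedAddCommGroup V] [InnerProductSpace ℝ V]
    [FiniteDimensional ℝ V]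
    {ι : Type*} [Fintype ι] (b : OrthonormalBasis ι ℝ V)
    (τ : V →ₗ[ℝ] V →ₗ[ℝ] V)
    (hanti : ∀ x y : V, τ x y = - τ y x)
    (hskew : ∀ x y z : V, ⟪τ x y, z⟫ = - ⟪τ x z, y⟫)
    (ξ : V) :
    ∀ X Y Z : V,
      (∑ i,
        (⟪b i, X⟫ * ⟪τ (b i) (τ ξ Y) - τ ξ (τ (b i) Y), Z⟫
          - ⟪b i, Y⟫ * ⟪τ (b i) (τ ξ X) - τ ξ (τ (b i) X), Z⟫
          + ⟪b i, Z⟫ * ⟪τ (b i) (τ ξ X) - τ ξ (τ (b i) X), Y⟫))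
      = (-2 : ℝ) * (-(⟪τ (τ ξ X) Y, Z⟫) - ⟪τ X (τ ξ Y), Z⟫ - ⟪τ X Y, τ ξ Z⟫) :=
  stmt8_general b τ hanti hskew ξ
end

section
/- Let q ≥ 2, W = ℝ^{4q}, and suppose ω₁, ω₂, ω₃ ∈ Λ²W are the Kähler forms of three anticommuting compatible complex structures I, J, K = IJ. If λ₁, λ₂, λ₃ ∈ ℝ satisfy Σ_a λ_a ω_a ∧ ω_a = 0 in Λ⁴W, then λ₁ = λ₂ = λ₃ = 0. -/
open scoped RealInnerProductSpace

/-- Let `W` be a `4q`-dimensional real inner product space, `q ≥ 2`,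
carrying three anticommuting compatible complex structures `I, J, K = IJ` with Kähler
forms `ω_a` (where `ω_I(X,Y) = ⟪I X, Y⟫`, etc.). If real numbers `λ₁, λ₂, λ₃` satisfy
`Σ_a λ_a ω_a ∧ ω_a = 0` in `Λ⁴W` — evaluated on vectors via
`(ω∧ω)(x₁,x₂,x₃,x₄) = 2(ω₁₂ω₃₄ - ω₁₃ω₂₄ + ω₁₄ω₂₃)` — then `λ₁ = λ₂ = λ₃ = 0`.
Equivalently, the 4-forms `ω_a ∧ ω_a` are linearly independent for `q ≥ 2`. -/
theorem stmt11 {W : Type*} [NormedAddCommGroup W] [InnerProductSpace ℝ W]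
    [FiniteDimensional ℝ W]
    (q : ℕ) (hq : 2 ≤ q) (hdim : Module.finrank ℝ W = 4 * q)
    (I J K : W →ₗ[ℝ] W)
    (hI2 : I ∘ₗ I = - LinearMap.id) (hJ2 : J ∘ₗ J = - LinearMap.id)
    (hIJ : I ∘ₗ J = K) (hJI : J ∘ₗ I = - K)
    (hIorth : ∀ x y : W, ⟪I x, I y⟫ = ⟪x, y⟫)
    (hJorth : ∀ x y : W, ⟪J x, J y⟫ = ⟪x, y⟫)
    (l₁ l₂ l₃ : ℝ)
    (h : ∀ x₁ x₂ x₃ x₄ : W,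
      l₁ * (⟪I x₁, x₂⟫ * ⟪I x₃, x₄⟫ - ⟪I x₁, x₃⟫ * ⟪I x₂, x₄⟫ + ⟪I x₁, x₄⟫ * ⟪I x₂, x₃⟫)
      + l₂ * (⟪J x₁, x₂⟫ * ⟪J x₃, x₄⟫ - ⟪J x₁, x₃⟫ * ⟪J x₂, x₄⟫ + ⟪J x₁, x₄⟫ * ⟪J x₂, x₃⟫)
      + l₃ * (⟪K x₁, x₂⟫ * ⟪K x₃, x₄⟫ - ⟪K x₁, x₃⟫ * ⟪K x₂, x₄⟫ + ⟪K x₁, x₄⟫ * ⟪K x₂, x₃⟫)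
      = 0) :
    l₁ = 0 ∧ l₂ = 0 ∧ l₃ = 0 := by
  classical
  -- pointwise composition identities
  have hII : ∀ x : W, I (I x) = -x := fun x => by
    have := congrArg (fun L : W →ₗ[ℝ] W => L x) hI2; simpa using this
  have hJJ : ∀ x : W, J (J x) = -x := fun x => by
    have := congrArg (fun L : W →ₗ[ℝ] W => L x) hJ2; simpa using this
  have hK : ∀ x : W, K x = I (J x) := fun x =>
    (congrArg (fun L : W →ₗ[ℝ] W => L x) hIJ).symm
  have hJI' : ∀ x : W, J (I x) = -(K x) := fun x => by
    have := congrArg (fun L : W →ₗ[ℝ] W => L x) hJI; simpa using this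
  have hKI : ∀ x : W, K (I x) = J x := fun x => by
    rw [hK, hJI', map_neg, hK, hII, neg_neg]
  have hIK : ∀ x : W, I (K x) = -(J x) := fun x => by
    rw [hK, hII]
  have hKJ : ∀ x : W, K (J x) = -(I x) := fun x => by
    rw [hK, hJJ, map_neg]
  have hJK : ∀ x : W, J (K x) = I x := fun x => by
    rw [hK x, hJI', hKJ, neg_neg]
  have hKK : ∀ x : W, K (K x) = -x := fun x => by
    rw [hK x, hKI, hJJ]
  -- K orthogonal
  have hKorth : ∀ x y : W, ⟪K x, K y⟫ = ⟪x, y⟫ := fun x y => by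
    rw [hK, hK, hIorth, hJorth]
  -- skewness
  have sI : ∀ x y : W, ⟪I x, y⟫ = -⟪x, I y⟫ := fun x y => by
    have := hIorth x (I y); rw [hII, inner_neg_right] at this; linarith
  have sJ : ∀ x y : W, ⟪J x, y⟫ = -⟪x, J y⟫ := fun x y => by
    have := hJorth x (J y); rw [hJJ, inner_neg_right] at this; linarith
  have sK : ∀ x y : W, ⟪K x, y⟫ = -⟪x, K y⟫ := fun x y => by
    have := hKorth x (K y); rw [hKK, inner_neg_right] at this; linarith
  -- ⟪x, A x⟫ = 0
  have zI : ∀ x : W, ⟪I x, x⟫ = 0 := fun x => by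
    have h1 := sI x x
    have h2 : ⟪x, I x⟫ = ⟪I x, x⟫ := real_inner_comm _ _
    linarith
  have zJ : ∀ x : W, ⟪J x, x⟫ = 0 := fun x => by
    have h1 := sJ x x
    have h2 : ⟪x, J x⟫ = ⟪J x, x⟫ := real_inner_comm _ _
    linarith
  have zK : ∀ x : W, ⟪K x, x⟫ = 0 := fun x => by
    have h1 := sK x x
    have h2 : ⟪x, K x⟫ = ⟪K x, x⟫ := real_inner_comm _ _
    linarith
  -- choose e ≠ 0
  have hpos : 0 < Module.finrank ℝ W := by omega
  have : Nontrivial W := Module.nontrivial_of_finrank_pos hpos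
  obtain ⟨e, he⟩ := exists_ne (0 : W)
  -- choose f ⟂ {e, Ie, Je, Ke}
  set s : Finset W := {e, I e, J e, K e} with hs
  set H : Submodule ℝ W := Submodule.span ℝ (s : Set W) with hH
  have hHne : H ≠ ⊤ := by
    intro htop
    have h1 : Module.finrank ℝ ↥H ≤ s.card := finrank_span_finset_le_card s
    have h2 : s.card ≤ 4 := by
      rw [hs]
      refine le_trans (Finset.card_insert_le _ _) (Nat.succ_le_succ ?_)
      refine le_trans (Finset.card_insert_le _ _) (Nat.succ_le_succ ?_)
      refine le_trans (Finset.card_insert_le _ _) (Nat.succ_le_succ ?_)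
      simp
    rw [htop, finrank_top] at h1
    omega
  have hbot : Hᗮ ≠ ⊥ := fun hb => hHne (Submodule.orthogonal_eq_bot_iff.mp hb)
  obtain ⟨f, hfH, hf⟩ := Submodule.exists_mem_ne_zero_of_ne_bot hbot
  have hforth : ∀ w ∈ H, ⟪w, f⟫ = 0 := fun w hw =>
    (Submodule.mem_orthogonal H f).mp hfH w hw
  have hef : ⟪e, f⟫ = 0 := hforth e (Submodule.subset_span (by simp [hs]))
  have hIef : ⟪I e, f⟫ = 0 := hforth _ (Submodule.subset_span (by simp [hs]))
  have hJef : ⟪J e, f⟫ = 0 := hforth _ (Submodule.subset_span (by simp [hs]))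
  have hKef : ⟪K e, f⟫ = 0 := hforth _ (Submodule.subset_span (by simp [hs]))
  have hepos : ⟪e, e⟫ ≠ 0 := inner_self_ne_zero.mpr he
  have hfpos : ⟪f, f⟫ ≠ 0 := inner_self_ne_zero.mpr hf
  -- skew lemmas oriented to move operators to the first slot
  have sI' : ∀ x y : W, ⟪x, I y⟫ = -⟪I x, y⟫ := fun x y => by rw [sI]; ring
  have sJ' : ∀ x y : W, ⟪x, J y⟫ = -⟪J x, y⟫ := fun x y => by rw [sJ]; ring
  have sK' : ∀ x y : W, ⟪x, K y⟫ = -⟪K x, y⟫ := fun x y => by rw [sK]; ring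
  have hK' : ∀ x : W, I (J x) = K x := fun x => (hK x).symm
  have zI' : ∀ x : W, ⟪x, I x⟫ = 0 := fun x => by rw [sI']; simp [zI]
  have E1 := h e (I e) f (I f)
  simp only [sI', sJ', sK', map_neg, hII, hJJ, hKK, hK', hJI', hKI, hIK, hKJ, hJK,
    inner_neg_left, inner_neg_right, neg_neg, zI, zJ, zK,
    hef, hIef, hJef, hKef] at E1
  have E2 := h e (J e) f (J f)
  simp only [sI', sJ', sK', map_neg, hII, hJJ, hKK, hK', hJI', hKI, hIK, hKJ, hJK,
    inner_neg_left, inner_neg_right, neg_neg, zI, zJ, zK,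
    hef, hIef, hJef, hKef] at E2
  have E3 := h e (K e) f (K f)
  simp only [sI', sJ', sK', map_neg, hII, hJJ, hKK, hK', hJI', hKI, hIK, hKJ, hJK,
    inner_neg_left, inner_neg_right, neg_neg, zI, zJ, zK,
    hef, hIef, hJef, hKef] at E3
  have hne : ⟪e, e⟫ * ⟪f, f⟫ ≠ 0 := mul_ne_zero hepos hfpos
  refine ⟨?_, ?_, ?_⟩
  · have : l₁ * (⟪e, e⟫ * ⟪f, f⟫) = 0 := by linarith
    exact (mul_eq_zero.mp this).resolve_right hne
  · have : l₂ * (⟪e, e⟫ * ⟪f, f⟫) = 0 := by linarith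
    exact (mul_eq_zero.mp this).resolve_right hne
  · have : l₃ * (⟪e, e⟫ * ⟪f, f⟫) = 0 := by linarith
    exact (mul_eq_zero.mp this).resolve_right hne
end
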